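/- arXiv:1512.07285 — 2 statements merged into one kernel-verified Lean document; each statement's English description precedes it below -/
import Mathlib

section
/- Let G be a locally compact, second-countable, Hausdorff topological group with left Haar measure μ, let H ≤ G be a closed subgroup with left Haar measure ν, and let E ⊆ G be a measurable set with μ(G \ E) = 0. Then for μ-almost every g ∈ G, one has gh ∈ E for ν-almost every h ∈ H; in particular, for μ-almost every g ∈ E, the set {h ∈ H : gh ∉ E} is ν-null. -/
open MeasureTheory Filter

/-! Right translation by a fixed element preserves `μ`-null sets, so by Fubini the map
`(g, h) ↦ g * h` from `μ × ν` to `μ` is quasi-measure-preserving. Hence the pull-back of the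
conull set `E` is conull for `μ × ν`, and its `μ`-almost every fibre is `ν`-conull. -/

section

variable {G α : Type*} [MeasurableSpace G] [Group G] [MeasurableMul₂ G] [MeasurableInv G]
  [MeasurableSpace α] (μ : Measure G) [SFinite μ] [μ.IsMulLeftInvariant]
  (ν : Measure α) [SFinite ν] {f : α → G}

theorem quasiMeasurePreserving_mul_comp_right (hf : Measurable f) :
    Measure.QuasiMeasurePreserving (fun p : G × α => p.1 * f p.2) (μ.prod ν) μ :=
  QuasiMeasurePreserving.prod_of_left (measurable_fst.mul (hf.comp measurable_snd))
    (Eventually.of_forall fun a => quasiMeasurePreserving_mul_right μ (f a))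

theorem ae_ae_mul_comp_right_of_ae (hf : Measurable f) {p : G → Prop} (hp : ∀ᵐ x ∂μ, p x) :
    ∀ᵐ g ∂μ, ∀ᵐ a ∂ν, p (g * f a) :=
  Measure.ae_ae_of_ae_prod ((quasiMeasurePreserving_mul_comp_right μ ν hf).ae hp)

end

theorem ae_translate_mem_of_full_measure_general
    {G : Type*} [Group G] [TopologicalSpace G] [IsTopologicalGroup G]
    [LocallyCompactSpace G] [SecondCountableTopology G]
    [MeasurableSpace G] [BorelSpace G]
    (μ : Measure G) [μ.IsHaarMeasure]
    (H : Subgroup G) (hH : IsClosed (H : Set G))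
    [MeasurableSpace ↥H] [BorelSpace ↥H]
    (ν : Measure ↥H) [ν.IsHaarMeasure]
    (E : Set G) (hfull : μ Eᶜ = 0) :
    (∀ᵐ g ∂μ, ∀ᵐ (h : ↥H) ∂ν, g * (h : G) ∈ E) ∧
      ∀ᵐ g ∂μ, g ∈ E → ν {h : ↥H | g * (h : G) ∉ E} = 0 := by
  -- these make the Haar measure `ν` σ-finite
  have : LocallyCompactSpace H := hH.locallyCompactSpace
  have : SecondCountableTopology H := TopologicalSpace.Subtype.secondCountableTopology _
  have hmain : ∀ᵐ g ∂μ, ∀ᵐ (h : H) ∂ν, g * (h : G) ∈ E :=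
    ae_ae_mul_comp_right_of_ae μ ν continuous_subtype_val.measurable (p := (· ∈ E))
      (mem_ae_iff.mpr hfull)
  exact ⟨hmain, hmain.mono fun g hg _ => ae_iff.mp hg⟩

/-- Fubini-type lemma: if `E` has full Haar measure in `G` and `H` is a closed subgroup
with left Haar measure `ν`, then for `μ`-almost every `g ∈ G` one has `g * h ∈ E` for
`ν`-almost every `h ∈ H`. -/
theorem ae_translate_mem_of_full_measure
    {G : Type*} [Group G] [TopologicalSpace G] [IsTopologicalGroup G]
    [LocallyCompactSpace G] [SecondCountableTopology G] [T2Space G]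
    [MeasurableSpace G] [BorelSpace G]
    (μ : Measure G) [μ.IsHaarMeasure]
    (H : Subgroup G) (hH : IsClosed (H : Set G))
    [MeasurableSpace ↥H] [BorelSpace ↥H]
    (ν : Measure ↥H) [ν.IsHaarMeasure]
    (E : Set G) (hE : MeasurableSet E) (hfull : μ Eᶜ = 0) :
    (∀ᵐ g ∂μ, ∀ᵐ (h : ↥H) ∂ν, g * (h : G) ∈ E) ∧
      ∀ᵐ g ∂μ, g ∈ E → ν {h : ↥H | g * (h : G) ∉ E} = 0 :=
  ae_translate_mem_of_full_measure_general μ H hH ν E hfull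
end

section
/- Let d ≥ 2, let U ⊆ ℝ^d be a nonempty open connected set, and let φ : U → ℝ^d be continuously differentiable. Suppose that for every v ∈ U the (Fréchet) derivative of φ at v is a scalar multiple of the identity, i.e. there is f(v) ∈ ℝ with Dφ(v) = f(v)·Id. Then f is constant on U and φ is affine: there exist c ∈ ℝ and b ∈ ℝ^d such that φ(v) = c·v + b for all v ∈ U. -/
/-!
If `Dφ = f • id`, then for every continuous linear functional `ℓ` the function `ℓ ∘ φ` has
derivative `f • ℓ`, so it is constant on the level sets of `ℓ` inside a convex set.
Differentiating `ℓ ∘ φ` in a direction `e` with `ℓ e ≠ 0` at two points of the same level set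
shows that `f` is constant on these level sets as well. In dimension at least two, any two points
of a ball are joined inside the ball through a level set of `⟪e₁, ·⟫` and one of `⟪e₂, ·⟫` for
orthonormal `e₁, e₂`, so `f` is locally constant, hence equal to some `c` on the connected set
`U`, and then `φ - c • id` has zero derivative on `U`.
-/

open Set Filter Topology Metric Module

section NormedSpace

variable {E : Type*} [NormedAddCommGroup E] [NormedSpace ℝ E]

theorem Convex.apply_eq_apply_of_hasFDerivAt_smul {V : Set E} (hV : Convex ℝ V)
    {g f : E → ℝ} {ℓ : E →L[ℝ] ℝ} (hg : ∀ v ∈ V, HasFDerivAt g (f v • ℓ) v)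
    {p q : E} (hp : p ∈ V) (hq : q ∈ V) (hpq : ℓ p = ℓ q) : g p = g q := by
  have hderiv : ∀ t ∈ Icc (0 : ℝ) 1, HasDerivAt (g ∘ AffineMap.lineMap p q) 0 t := by
    intro t ht
    simpa [hpq] using (hg _ (hV.lineMap_mem hp hq ht)).comp_hasDerivAt t
      (AffineMap.hasDerivAt_lineMap (a := p) (b := q) (x := t))
  have := constant_of_has_deriv_right_zero
    (fun t ht => (hderiv t ht).continuousAt.continuousWithinAt)
    (fun t ht => (hderiv t (Ico_subset_Icc_self ht)).hasDerivWithinAt) 1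
    (right_mem_Icc.2 zero_le_one)
  simpa using this.symm

theorem Convex.eq_of_hasFDerivAt_smul_id {V : Set E} (hV : Convex ℝ V) (hVo : IsOpen V)
    {φ : E → E} {f : E → ℝ} (hφ : ∀ v ∈ V, HasFDerivAt φ (f v • ContinuousLinearMap.id ℝ E) v)
    {ℓ : E →L[ℝ] ℝ} (hℓ : ℓ ≠ 0) {p q : E} (hp : p ∈ V) (hq : q ∈ V) (hpq : ℓ p = ℓ q) :
    f p = f q := by
  obtain ⟨e, he⟩ := ContinuousLinearMap.exists_ne_zero hℓ
  have hg : ∀ v ∈ V, HasFDerivAt (ℓ ∘ φ) (f v • ℓ) v := fun v hv => by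
    simpa using ℓ.hasFDerivAt.comp v (hφ v hv)
  have hslope : ∀ x ∈ V, HasDerivAt (fun s : ℝ => ℓ (φ (x + s • e))) (f x * ℓ e) 0 := by
    intro x hx
    have hline : HasDerivAt (fun s : ℝ => x + s • e) e 0 := by
      simpa using ((hasDerivAt_id (0 : ℝ)).smul_const e).const_add x
    have := (hg (x + (0 : ℝ) • e) (by simpa using hx)).comp_hasDerivAt 0 hline
    simp only [zero_smul, add_zero] at this
    exact this
  have hnear : ∀ᶠ s : ℝ in 𝓝 0, p + s • e ∈ V ∧ q + s • e ∈ V := by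
    have hcont : ∀ x : E, Continuous fun s : ℝ => x + s • e := fun x => by fun_prop
    exact ((hcont p).continuousAt.eventually_mem (by simpa using hVo.mem_nhds hp)).and
      ((hcont q).continuousAt.eventually_mem (by simpa using hVo.mem_nhds hq))
  have heq : (fun s : ℝ => ℓ (φ (p + s • e))) =ᶠ[𝓝 0] fun s => ℓ (φ (q + s • e)) :=
    hnear.mono fun s ⟨hps, hqs⟩ =>
      hV.apply_eq_apply_of_hasFDerivAt_smul hg hps hqs (by simp [hpq])
  exact mul_right_cancel₀ he ((hslope p hp).unique ((hslope q hq).congr_of_eventuallyEq heq))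

end NormedSpace

section InnerProductSpace

variable {E : Type*} [NormedAddCommGroup E] [InnerProductSpace ℝ E]

theorem exists_orthonormal_pair_of_two_le_finrank (hE : 2 ≤ finrank ℝ E) :
    ∃ e₁ e₂ : E, ‖e₁‖ = 1 ∧ ‖e₂‖ = 1 ∧ inner ℝ e₁ e₂ = 0 := by
  have : FiniteDimensional ℝ E := Module.finite_of_finrank_pos (by omega)
  let b := stdOrthonormalBasis ℝ E
  exact ⟨b ⟨0, by omega⟩, b ⟨1, by omega⟩, b.orthonormal.1 _, b.orthonormal.1 _,
    b.orthonormal.2 (by simp)⟩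

theorem eq_of_mem_ball_of_hasFDerivAt_smul_id (hE : 2 ≤ finrank ℝ E) {φ : E → E} {f : E → ℝ}
    {x : E} {r : ℝ}
    (hφ : ∀ v ∈ ball x r, HasFDerivAt φ (f v • ContinuousLinearMap.id ℝ E) v) {y : E}
    (hy : y ∈ ball x r) : f y = f x := by
  obtain ⟨e₁, e₂, he₁, he₂, he₁₂⟩ := exists_orthonormal_pair_of_two_le_finrank hE
  have hℓ : ∀ e : E, ‖e‖ = 1 → innerSL ℝ e ≠ 0 := fun e he h => by
    simpa [he] using congr($h e)
  set m := x + inner ℝ e₁ (y - x) • e₁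
  have hm : m ∈ ball x r := by
    rw [mem_ball, dist_eq_norm, add_sub_cancel_left, norm_smul, he₁, mul_one]
    exact (abs_real_inner_le_norm e₁ (y - x)).trans_lt (by simpa [he₁, dist_eq_norm] using hy)
  have hx : x ∈ ball x r := mem_ball_self (pos_of_mem_ball hy)
  calc f y = f m := (convex_ball x r).eq_of_hasFDerivAt_smul_id isOpen_ball hφ (hℓ e₁ he₁) hy hm
        (by simp [m, inner_add_right, inner_sub_right, real_inner_smul_right, he₁])
    _ = f x := (convex_ball x r).eq_of_hasFDerivAt_smul_id isOpen_ball hφ (hℓ e₂ he₂) hm hx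
        (by simp [m, inner_add_right, real_inner_smul_right, real_inner_comm, he₁₂])

theorem IsOpen.exists_eq_const_of_hasFDerivAt_smul_id (hE : 2 ≤ finrank ℝ E) {U : Set E}
    (hU : IsOpen U) (hU' : IsPreconnected U) {φ : E → E} {f : E → ℝ}
    (hφ : ∀ v ∈ U, HasFDerivAt φ (f v • ContinuousLinearMap.id ℝ E) v) :
    ∃ c, ∀ v ∈ U, f v = c := by
  have hloc : ∀ x ∈ U, HasFDerivAt f (0 : E →L[ℝ] ℝ) x := by
    intro x hx
    obtain ⟨r, hr, hball⟩ := Metric.isOpen_iff.1 hU x hx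
    refine (hasFDerivAt_const (f x) x).congr_of_eventuallyEq ?_
    filter_upwards [ball_mem_nhds x hr] with y hy
    exact eq_of_mem_ball_of_hasFDerivAt_smul_id hE (fun v hv => hφ v (hball hv)) hy
  exact hU.exists_is_const_of_fderiv_eq_zero hU'
    (fun x hx => (hloc x hx).differentiableAt.differentiableWithinAt) fun x hx => (hloc x hx).fderiv

end InnerProductSpace

theorem affine_of_fderiv_smul_id_general (d : ℕ) (hd : 2 ≤ d)
    (U : Set (EuclideanSpace ℝ (Fin d))) (hUopen : IsOpen U)
    (hUconn : IsConnected U)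
    (φ : EuclideanSpace ℝ (Fin d) → EuclideanSpace ℝ (Fin d))
    (hφ : ContDiffOn ℝ 1 φ U)
    (f : EuclideanSpace ℝ (Fin d) → ℝ)
    (hder : ∀ v ∈ U, fderiv ℝ φ v
      = f v • ContinuousLinearMap.id ℝ (EuclideanSpace ℝ (Fin d))) :
    ∃ (c : ℝ) (b : EuclideanSpace ℝ (Fin d)),
      (∀ v ∈ U, f v = c) ∧ ∀ v ∈ U, φ v = c • v + b := by
  have hdiff : DifferentiableOn ℝ φ U := hφ.differentiableOn one_ne_zero
  have hφ' : ∀ v ∈ U, HasFDerivAt φ (f v • ContinuousLinearMap.id ℝ _) v := fun v hv =>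
    hder v hv ▸ (hdiff.differentiableAt (hUopen.mem_nhds hv)).hasFDerivAt
  obtain ⟨c, hc⟩ := hUopen.exists_eq_const_of_hasFDerivAt_smul_id
    (by rwa [finrank_euclideanSpace_fin]) hUconn.isPreconnected hφ'
  obtain ⟨b, hb⟩ := hUopen.exists_eq_add_of_fderiv_eq hUconn.isPreconnected hdiff
    ((differentiable_id.const_smul c).differentiableOn) fun v hv => by
      rw [hder v hv, hc v hv]
      exact ((hasFDerivAt_id v).const_smul c).fderiv.symm
  exact ⟨c, b, hc, hb⟩

/-- If `φ` is `C¹` on a nonempty open connected set `U ⊆ ℝ^d` (`d ≥ 2`) and at every point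
of `U` its derivative is the scalar `f v` times the identity, then `f` is constant on `U`
and `φ` is affine on `U`: `φ v = c • v + b`. -/
theorem affine_of_fderiv_smul_id (d : ℕ) (hd : 2 ≤ d)
    (U : Set (EuclideanSpace ℝ (Fin d))) (hUopen : IsOpen U) (hUne : U.Nonempty)
    (hUconn : IsConnected U)
    (φ : EuclideanSpace ℝ (Fin d) → EuclideanSpace ℝ (Fin d))
    (hφ : ContDiffOn ℝ 1 φ U)
    (f : EuclideanSpace ℝ (Fin d) → ℝ)
    (hder : ∀ v ∈ U, fderiv ℝ φ v
      = f v • ContinuousLinearMap.id ℝ (EuclideanSpace ℝ (Fin d))) :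
    ∃ (c : ℝ) (b : EuclideanSpace ℝ (Fin d)),
      (∀ v ∈ U, f v = c) ∧ ∀ v ∈ U, φ v = c • v + b :=
  affine_of_fderiv_smul_id_general d hd U hUopen hUconn φ hφ f hder
end
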